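/- Let G be a finite simple graph with n vertices and m edges, let ℓ(G) be its line graph, and let Q(G) = D(G) + A(G) be its signless Laplacian matrix. Then in ℝ[X] one has the polynomial identity (X+2)^n · Φ_{A(ℓ(G))}(X) = (X+2)^m · Φ_{Q(G)}(X+2), where Φ_M denotes the characteristic polynomial of the matrix M and Φ_{Q(G)}(X+2) is the composition of Φ_{Q(G)} with X+2. -/

import Mathlib

open Matrix Polynomial BigOperators Kronecker

namespace NLS

variable {V : Type*}

/-- Adjacency matrix over `ℝ` (classical decidability). -/
noncomputable def adjMat (G : SimpleGraph V) : Matrix V V ℝ :=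
  letI := Classical.decRel G.Adj
  G.adjMatrix ℝ

/-- Degree of a vertex (classical decidability). -/
noncomputable def deg [Fintype V] (G : SimpleGraph V) (v : V) : ℕ :=
  letI := Classical.decRel G.Adj
  G.degree v

/-- The normalized Laplacian `I - D^{-1/2} A D^{-1/2}`. -/
noncomputable def normLap [Fintype V] (G : SimpleGraph V) : Matrix V V ℝ :=
  letI := Classical.decEq V
  1 - (Matrix.diagonal fun v => (Real.sqrt (deg G v))⁻¹) * adjMat G *
      (Matrix.diagonal fun v => (Real.sqrt (deg G v))⁻¹)

/-- `G` is `r`-regular. -/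
def IsReg [Fintype V] (G : SimpleGraph V) (r : ℕ) : Prop := ∀ v, deg G v = r

/-- Vertex-edge incidence matrix over `ℝ`. -/
def incMat [DecidableEq V] (G : SimpleGraph V) : Matrix V G.edgeSet ℝ :=
  Matrix.of fun v e => if v ∈ (e : Sym2 V) then 1 else 0

/-- The number of spanning trees of `G`. -/
noncomputable def numSpanningTrees [Fintype V] (G : SimpleGraph V) : ℕ :=
  Nat.card {H : SimpleGraph V // H ≤ G ∧ H.IsTree}

section Corona

variable {V1 V2 V3 : Type*}

/-- Adjacency for the subdivision vertex-edge neighbourhood **vertex**-corona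
`G1^S ⋈ (G2^V ∪ G3^E)`. Vertices: original `V1`, inserted `G1.edgeSet`,
copies of `G2` indexed by `V1`, copies of `G3` indexed by `G1.edgeSet`. -/
def svevAdj (G1 : SimpleGraph V1) (G2 : SimpleGraph V2) (G3 : SimpleGraph V3) :
    (V1 ⊕ (G1.edgeSet ⊕ ((V1 × V2) ⊕ (G1.edgeSet × V3)))) →
    (V1 ⊕ (G1.edgeSet ⊕ ((V1 × V2) ⊕ (G1.edgeSet × V3)))) → Prop
  | .inl v, .inr (.inl e) => v ∈ (e : Sym2 V1)
  | .inr (.inl e), .inl v => v ∈ (e : Sym2 V1)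
  | .inr (.inl e), .inr (.inr (.inl p)) => p.1 ∈ (e : Sym2 V1)
  | .inr (.inr (.inl p)), .inr (.inl e) => p.1 ∈ (e : Sym2 V1)
  | .inr (.inl e), .inr (.inr (.inr q)) => q.1 = e
  | .inr (.inr (.inr q)), .inr (.inl e) => q.1 = e
  | .inr (.inr (.inl p)), .inr (.inr (.inl p')) => p.1 = p'.1 ∧ G2.Adj p.2 p'.2
  | .inr (.inr (.inr q)), .inr (.inr (.inr q')) => q.1 = q'.1 ∧ G3.Adj q.2 q'.2
  | _, _ => False

/-- The subdivision vertex-edge neighbourhood vertex-corona `G1^S ⋈ (G2^V ∪ G3^E)`. -/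
def svev (G1 : SimpleGraph V1) (G2 : SimpleGraph V2) (G3 : SimpleGraph V3) :
    SimpleGraph (V1 ⊕ (G1.edgeSet ⊕ ((V1 × V2) ⊕ (G1.edgeSet × V3)))) where
  Adj := svevAdj G1 G2 G3
  symm := by
    constructor
    rintro (v|e|p|q) (v'|e'|p'|q') h <;>
      first
        | exact h
        | exact ⟨h.1.symm, h.2.symm⟩
        | exact h.elim
  loopless := by
    constructor
    rintro (v|e|p|q) h
    · exact h
    · exact h
    · exact G2.loopless.irrefl _ h.2
    · exact G3.loopless.irrefl _ h.2

/-- Adjacency for the subdivision vertex-edge neighbourhood **edge**-corona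
`G1^S ◊ (G2^V ∪ G3^E)`. Vertices: original `V1`, inserted `G1.edgeSet`,
copies of `G2` indexed by `G1.edgeSet`, copies of `G3` indexed by `V1`. -/
def sveeAdj (G1 : SimpleGraph V1) (G2 : SimpleGraph V2) (G3 : SimpleGraph V3) :
    (V1 ⊕ (G1.edgeSet ⊕ ((G1.edgeSet × V2) ⊕ (V1 × V3)))) →
    (V1 ⊕ (G1.edgeSet ⊕ ((G1.edgeSet × V2) ⊕ (V1 × V3)))) → Prop
  | .inl v, .inr (.inl e) => v ∈ (e : Sym2 V1)
  | .inr (.inl e), .inl v => v ∈ (e : Sym2 V1)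
  | .inl v, .inr (.inr (.inl p)) => v ∈ (p.1 : Sym2 V1)
  | .inr (.inr (.inl p)), .inl v => v ∈ (p.1 : Sym2 V1)
  | .inl v, .inr (.inr (.inr q)) => q.1 = v
  | .inr (.inr (.inr q)), .inl v => q.1 = v
  | .inr (.inr (.inl p)), .inr (.inr (.inl p')) => p.1 = p'.1 ∧ G2.Adj p.2 p'.2
  | .inr (.inr (.inr q)), .inr (.inr (.inr q')) => q.1 = q'.1 ∧ G3.Adj q.2 q'.2
  | _, _ => False

/-- The subdivision vertex-edge neighbourhood edge-corona `G1^S ◊ (G2^V ∪ G3^E)`. -/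
def svee (G1 : SimpleGraph V1) (G2 : SimpleGraph V2) (G3 : SimpleGraph V3) :
    SimpleGraph (V1 ⊕ (G1.edgeSet ⊕ ((G1.edgeSet × V2) ⊕ (V1 × V3)))) where
  Adj := sveeAdj G1 G2 G3
  symm := by
    constructor
    rintro (v|e|p|q) (v'|e'|p'|q') h <;>
      first
        | exact h
        | exact ⟨h.1.symm, h.2.symm⟩
        | exact h.elim
  loopless := by
    constructor
    rintro (v|e|p|q) h
    · exact h
    · exact h
    · exact G2.loopless.irrefl _ h.2
    · exact G3.loopless.irrefl _ h.2

end Corona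


/-! With `B` the vertex–edge incidence matrix, `B Bᵀ = Q(G)` and `Bᵀ B = A(ℓ(G)) + 2I`, the latter
because two distinct edges share at most one vertex. The identity is then
`X ^ m * χ(B Bᵀ) = X ^ n * χ(Bᵀ B)` (`Matrix.charpoly_mul_comm'`) with `X + 2` substituted for `X`. -/

section Incidence

open Finset

lemma adjMat_apply (G : SimpleGraph V) (u v : V) [Decidable (G.Adj u v)] :
    adjMat G u v = if G.Adj u v then (1 : ℝ) else 0 := by
  by_cases h : G.Adj u v <;> simp [adjMat, h]

lemma card_eq_ite_nonempty_of_card_le_one {α : Type*} {s : Finset α} (hs : #s ≤ 1) :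
    #s = if s.Nonempty then 1 else 0 := by
  split_ifs with h
  · exact le_antisymm hs h.card_pos
  · exact card_eq_zero.2 (not_nonempty_iff_eq_empty.1 h)

variable [DecidableEq V] (G : SimpleGraph V)

section EdgeFintype

variable [Fintype G.edgeSet]

lemma card_filter_edge_mem_and_mem_le_one {u v : V} (huv : u ≠ v) :
    #{e : G.edgeSet | u ∈ (e : Sym2 V) ∧ v ∈ (e : Sym2 V)} ≤ 1 := by
  refine card_le_one.2 fun e he f hf => Subtype.ext ?_
  simp only [mem_filter, mem_univ, true_and] at he hf
  rw [(Sym2.mem_and_mem_iff huv).1 he, (Sym2.mem_and_mem_iff huv).1 hf]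

lemma card_filter_edge_mem_and_mem_of_ne {u v : V} [Decidable (G.Adj u v)] (huv : u ≠ v) :
    #{e : G.edgeSet | u ∈ (e : Sym2 V) ∧ v ∈ (e : Sym2 V)} = if G.Adj u v then 1 else 0 := by
  rw [card_eq_ite_nonempty_of_card_le_one (card_filter_edge_mem_and_mem_le_one G huv)]
  congr 1
  simp [filter_nonempty_iff, G.adj_iff_exists_edge, huv, and_left_comm]

lemma card_filter_edge_mem [Fintype V] (u : V) :
    #{e : G.edgeSet | u ∈ (e : Sym2 V)} = deg G u := by
  classical
  calc #{e : G.edgeSet | u ∈ (e : Sym2 V)}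
      = Fintype.card {e : G.edgeSet // u ∈ (e : Sym2 V)} := (Fintype.card_subtype _).symm
    _ = Fintype.card (G.incidenceSet u) :=
        Fintype.card_congr (Equiv.subtypeSubtypeEquivSubtypeInter (· ∈ G.edgeSet) (u ∈ ·))
    _ = deg G u := by rw [G.card_incidenceSet_eq_degree]; rfl

lemma incMat_mul_transpose_apply (u v : V) :
    (incMat G * (incMat G)ᵀ) u v = #{e : G.edgeSet | u ∈ (e : Sym2 V) ∧ v ∈ (e : Sym2 V)} := by
  simp only [incMat, mul_apply, transpose_apply, of_apply, ite_zero_mul_ite_zero, one_mul,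
    sum_boole]

end EdgeFintype

variable [Fintype V]

lemma card_filter_mem_and_mem_le_one {e f : Sym2 V} (hef : e ≠ f) :
    #{v | v ∈ e ∧ v ∈ f} ≤ 1 := by
  refine card_le_one.2 fun a ha b hb => by_contra fun hab => hef ?_
  simp only [mem_filter, mem_univ, true_and] at ha hb
  rw [(Sym2.mem_and_mem_iff hab).1 ⟨ha.1, hb.1⟩, (Sym2.mem_and_mem_iff hab).1 ⟨ha.2, hb.2⟩]

lemma card_filter_mem_of_mem_edgeSet {e : Sym2 V} (he : e ∈ G.edgeSet) : #{v | v ∈ e} = 2 := by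
  rw [← Sym2.card_toFinset_of_not_isDiag e (G.not_isDiag_of_mem_edgeSet he)]
  congr 1
  ext v
  simp

lemma card_filter_mem_and_mem_of_ne {e f : G.edgeSet} [Decidable (G.lineGraph.Adj e f)]
    (hef : e ≠ f) :
    #{v | v ∈ (e : Sym2 V) ∧ v ∈ (f : Sym2 V)} = if G.lineGraph.Adj e f then 1 else 0 := by
  rw [card_eq_ite_nonempty_of_card_le_one
    (card_filter_mem_and_mem_le_one (Subtype.coe_injective.ne hef))]
  congr 1
  simp [filter_nonempty_iff, SimpleGraph.lineGraph_adj_iff_exists, hef]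

lemma transpose_mul_incMat_apply (e f : G.edgeSet) :
    ((incMat G)ᵀ * incMat G) e f = #{v | v ∈ (e : Sym2 V) ∧ v ∈ (f : Sym2 V)} := by
  simp only [incMat, mul_apply, transpose_apply, of_apply, ite_zero_mul_ite_zero, one_mul,
    sum_boole]

lemma incMat_mul_transpose [Fintype G.edgeSet] :
    incMat G * (incMat G)ᵀ = diagonal (fun v => (deg G v : ℝ)) + adjMat G := by
  classical
  ext u v
  rw [incMat_mul_transpose_apply, Matrix.add_apply, adjMat_apply]
  rcases eq_or_ne u v with rfl | huv
  · simp [card_filter_edge_mem]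
  · simp [card_filter_edge_mem_and_mem_of_ne G huv, huv]

lemma transpose_mul_incMat [Fintype G.edgeSet] :
    (incMat G)ᵀ * incMat G = adjMat G.lineGraph + scalar G.edgeSet (2 : ℝ) := by
  classical
  ext e f
  rw [transpose_mul_incMat_apply, Matrix.add_apply, adjMat_apply]
  rcases eq_or_ne e f with rfl | hef
  · simp [card_filter_mem_of_mem_edgeSet G e.2]
  · simp [card_filter_mem_and_mem_of_ne G hef, hef]

end Incidence

theorem stmt_1 {V : Type*} [Fintype V] [DecidableEq V] (G : SimpleGraph V)
    [Fintype G.edgeSet] :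
    (X + C 2) ^ Fintype.card V * (adjMat G.lineGraph).charpoly =
      (X + C 2) ^ Fintype.card G.edgeSet *
        ((Matrix.diagonal (fun v => (deg G v : ℝ)) + adjMat G).charpoly.comp (X + C 2)) := by
  have hline : (adjMat G.lineGraph).charpoly =
      ((incMat G)ᵀ * incMat G).charpoly.comp (X + C 2) := by
    rw [← charpoly_sub_scalar, transpose_mul_incMat, add_sub_cancel_right]
  have hgram := congrArg (·.comp (X + C 2)) (charpoly_mul_comm' (incMat G) (incMat G)ᵀ)
  simp only [mul_comp, pow_comp, X_comp, incMat_mul_transpose] at hgram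
  rw [hline, hgram]

end NLS
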